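/- Let M and V be compact metric spaces and suppose there exists ε > 0 such that any two continuous maps from V to M that are 4ε-close are homotopic. For each k ∈ ℕ let N_k be a metric space, f_k : M → N_k a continuous map which is a homotopy equivalence with homotopy inverse g_k : N_k → M, and h_k : V → N_k a topological embedding with f_k(M) ⊆ h_k(V). Assume that the sequences (g_k) and (h_k) are almost equicontinuous. Then there is a finite set F ⊆ ℕ such that for every k ∈ ℕ there exists j ∈ F with f_k homotopic, as a map M → N_k, to h_k ∘ h_j⁻¹ ∘ f_j. -/

import Mathlib

/-- A sequence of maps `f k : X k → Y k` between metric spaces is `ε`-equicontinuous if there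
is a common `δ > 0` such that all the maps move `δ`-close points to `ε`-close points. -/
def IsEquicontFamily {X Y : ℕ → Type*} [∀ k, MetricSpace (X k)] [∀ k, MetricSpace (Y k)]
    (I : Set ℕ) (f : ∀ k, X k → Y k) (ε : ℝ) : Prop :=
  ∃ δ > 0, ∀ k ∈ I, ∀ x x' : X k, dist x x' < δ → dist (f k x) (f k x') < ε

/-- A sequence of maps `f k : X k → Y k` between metric spaces is almost equicontinuous if
for every `ε > 0` there is a finite set `F ⊆ ℕ` such that the subfamily indexed by `ℕ \ F`
is `ε`-equicontinuous. -/
def IsAlmostEquicont {X Y : ℕ → Type*} [∀ k, MetricSpace (X k)] [∀ k, MetricSpace (Y k)]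
    (f : ∀ k, X k → Y k) : Prop :=
  ∀ ε > 0, ∃ F : Finset ℕ, IsEquicontFamily ((F : Set ℕ)ᶜ) f ε

/-!
The maps `g k ∘ h k : V → M` form an almost equicontinuous sequence between compact spaces, so
by a pigeonhole argument on their values at finite nets they fall into finitely many classes of
mutually `4ε`-close, hence homotopic, maps. If `g k ∘ h k ≃ g j ∘ h j`, then
`g k ∘ (h k ∘ φ j) ≃ g j ∘ f j ≃ id`, and since `f k ∘ g k ≃ id` this forces `h k ∘ φ j ≃ f k`.
-/

theorem Finite.exists_finset_forall_exists_eq {ι α : Type*} [Finite α] (c : ι → α) :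
    ∃ F : Finset ι, ∀ i, ∃ j ∈ F, c j = c i := by
  classical
  have : Fintype (Set.range c) := Fintype.ofFinite _
  exact ⟨Finset.univ.image (Set.rangeSplitting c), fun i =>
    ⟨_, Finset.mem_image_of_mem _ (Finset.mem_univ ⟨c i, Set.mem_range_self i⟩),
      Set.apply_rangeSplitting c _⟩⟩

theorem CompactSpace.exists_finite_forall_exists_dist_lt {X : Type*} [PseudoMetricSpace X]
    [CompactSpace X] {e : ℝ} (he : 0 < e) :
    ∃ t : Set X, t.Finite ∧ ∀ x, ∃ y ∈ t, dist x y < e := by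
  obtain ⟨t, -, ht, hcover⟩ := finite_cover_balls_of_compact (isCompact_univ (X := X)) he
  exact ⟨t, ht, fun x => by simpa using hcover (Set.mem_univ x)⟩

/-- Two maps with the same pattern of `ε`-approximate values on a `δ`-net are `4ε`-close. -/
theorem exists_finset_forall_exists_dist_lt_of_uniform_modulus {ι V M : Type*}
    [PseudoMetricSpace V] [CompactSpace V] [PseudoMetricSpace M] [CompactSpace M]
    (β : ι → V → M) {ε δ : ℝ} (hε : 0 < ε) (hδ : 0 < δ)
    (hβ : ∀ i x x', dist x x' < δ → dist (β i x) (β i x') < ε) :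
    ∃ F : Finset ι, ∀ i, ∃ j ∈ F, ∀ x, dist (β i x) (β j x) < 4 * ε := by
  obtain ⟨tV, htV, hnetV⟩ := CompactSpace.exists_finite_forall_exists_dist_lt (X := V) hδ
  obtain ⟨tM, htM, hnetM⟩ := CompactSpace.exists_finite_forall_exists_dist_lt (X := M) hε
  choose π hπ using hnetM
  have : Finite tV := htV.to_subtype
  have : Finite tM := htM.to_subtype
  obtain ⟨F, hF⟩ := Finite.exists_finset_forall_exists_eq
    fun i (v : tV) => (⟨π (β i v), (hπ (β i v)).1⟩ : tM)
  refine ⟨F, fun i => ?_⟩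
  obtain ⟨j, hjF, hji⟩ := hF i
  refine ⟨j, hjF, fun x => ?_⟩
  obtain ⟨v, hv, hxv⟩ := hnetV x
  have hπ_eq : π (β j v) = π (β i v) := congrArg Subtype.val (congrFun hji ⟨v, hv⟩)
  calc dist (β i x) (β j x)
      ≤ dist (β i x) (β i v) + dist (β i v) (π (β i v)) + dist (π (β j v)) (β j v)
          + dist (β j v) (β j x) := by
        rw [hπ_eq]
        linarith [dist_triangle4 (β i x) (β i v) (π (β i v)) (β j x),
          dist_triangle (π (β i v)) (β j v) (β j x)]
    _ < ε + ε + ε + ε := by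
        gcongr
        · exact hβ i x v hxv
        · exact (hπ _).2
        · rw [dist_comm]; exact (hπ _).2
        · exact hβ j v x (by rwa [dist_comm])
    _ = 4 * ε := by ring

theorem IsAlmostEquicont.comp {X Y Z : ℕ → Type*} [∀ k, MetricSpace (X k)]
    [∀ k, MetricSpace (Y k)] [∀ k, MetricSpace (Z k)] {g : ∀ k, Y k → Z k} {h : ∀ k, X k → Y k}
    (hg : IsAlmostEquicont g) (hh : IsAlmostEquicont h) :
    IsAlmostEquicont (fun k => g k ∘ h k) := by
  intro ε hε
  obtain ⟨Fg, δg, hδg, hgδ⟩ := hg ε hε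
  obtain ⟨Fh, δh, hδh, hhδ⟩ := hh δg hδg
  refine ⟨Fg ∪ Fh, δh, hδh, fun k hk x x' hxx' => ?_⟩
  simp only [Finset.coe_union, Set.compl_union, Set.mem_inter_iff] at hk
  exact hgδ k hk.1 _ _ (hhδ k hk.2 x x' hxx')

theorem IsAlmostEquicont.exists_finset_forall_exists_dist_lt {V M : Type*} [MetricSpace V]
    [CompactSpace V] [MetricSpace M] [CompactSpace M] {β : ℕ → V → M}
    (hβ : IsAlmostEquicont (X := fun _ => V) (Y := fun _ => M) β) {ε : ℝ} (hε : 0 < ε) :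
    ∃ F : Finset ℕ, ∀ k, ∃ j ∈ F, ∀ x, dist (β k x) (β j x) < ε := by
  obtain ⟨F₀, δ, hδ, hβδ⟩ := hβ (ε / 4) (by positivity)
  obtain ⟨F₁, hF₁⟩ := exists_finset_forall_exists_dist_lt_of_uniform_modulus
    (fun k : ((F₀ : Set ℕ)ᶜ : Set ℕ) => β k) (by positivity) hδ
    fun k => hβδ k k.2
  refine ⟨F₀ ∪ F₁.map (Function.Embedding.subtype _), fun k => ?_⟩
  by_cases hk : k ∈ F₀
  · exact ⟨k, Finset.mem_union_left _ hk, fun x => by simpa using hε⟩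
  · obtain ⟨j, hjF, hkj⟩ := hF₁ ⟨k, hk⟩
    refine ⟨j, Finset.mem_union_right _ (Finset.mem_map_of_mem _ hjF), fun x => ?_⟩
    simpa [mul_div_cancel₀] using hkj x

theorem ContinuousMap.homotopic_of_comp_homotopic_id {X Y : Type*} [TopologicalSpace X]
    [TopologicalSpace Y] {f u : C(X, Y)} {g : C(Y, X)} (hfg : (f.comp g).Homotopic (.id Y))
    (hgu : (g.comp u).Homotopic (.id X)) : f.Homotopic u :=
  ((Homotopic.refl f).comp hgu.symm).trans (hfg.comp (Homotopic.refl u))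

/-- Let `M`, `V` be compact metric spaces such that for some `ε > 0` any two `4ε`-close
continuous maps `V → M` are homotopic.  For each `k` let `f k : M → N k` be a homotopy
equivalence with homotopy inverse `g k : N k → M`, and `h k : V → N k` a topological
embedding with `f k '' M ⊆ h k '' V`; here `φ k : M → V` denotes the map `(h k)⁻¹ ∘ f k`.
If `(g k)` and `(h k)` are almost equicontinuous, then there is a finite `F ⊆ ℕ` such that
every `f k` is homotopic to `h k ∘ (h j)⁻¹ ∘ f j` for some `j ∈ F`. -/
theorem finitely_many_classes_of_almost_equicont_homotopy_inverses
    {M V : Type*} [MetricSpace M] [CompactSpace M] [MetricSpace V] [CompactSpace V]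
    {N : ℕ → Type*} [∀ k, MetricSpace (N k)]
    (ε : ℝ) (hε : 0 < ε)
    (hclose : ∀ f g : C(V, M), (∀ x, dist (f x) (g x) ≤ 4 * ε) → f.Homotopic g)
    (f : ∀ k, C(M, N k)) (g : ∀ k, C(N k, M))
    (hgf : ∀ k, ((g k).comp (f k)).Homotopic (ContinuousMap.id M))
    (hfg : ∀ k, ((f k).comp (g k)).Homotopic (ContinuousMap.id (N k)))
    (h : ∀ k, V → N k) (hemb : ∀ k, Topology.IsEmbedding (h k))
    (φ : ∀ k, M → V) (hφ : ∀ (k : ℕ) (x : M), h k (φ k x) = f k x)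
    (hφc : ∀ k, Continuous (φ k))
    (hgae : IsAlmostEquicont (X := N) (Y := fun _ => M) (fun k => ⇑(g k)))
    (hhae : IsAlmostEquicont (X := fun _ => V) (Y := N) h) :
    ∃ F : Finset ℕ, ∀ k : ℕ, ∃ j ∈ F,
      (f k).Homotopic
        ((⟨h k, (hemb k).continuous⟩ : C(V, N k)).comp ⟨φ j, hφc j⟩) := by
  obtain ⟨F, hF⟩ := (hgae.comp hhae).exists_finset_forall_exists_dist_lt
    (show 0 < 4 * ε by positivity)
  refine ⟨F, fun k => ?_⟩
  obtain ⟨j, hjF, hkj⟩ := hF k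
  refine ⟨j, hjF, ContinuousMap.homotopic_of_comp_homotopic_id (hfg k) ?_⟩
  have hgh : ((g k).comp ⟨h k, (hemb k).continuous⟩).Homotopic
      ((g j).comp ⟨h j, (hemb j).continuous⟩) := hclose _ _ fun x => (hkj x).le
  have hghφ : ((g j).comp ⟨h j, (hemb j).continuous⟩).comp ⟨φ j, hφc j⟩ = (g j).comp (f j) :=
    ContinuousMap.ext fun x => congrArg (g j) (hφ j x)
  exact (hgh.comp (.refl _)).trans (hghφ ▸ hgf j)
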